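/- arXiv:1412.8694 — 7 statements merged into one kernel-verified Lean document; each statement's English description precedes it below -/
import Mathlib

section
/- Let σ be a density operator on ℂ^n, let Φ and Ψ be quantum channels on n×n complex matrices with Kraus operators {A_i}_{i=1}^k and {B_j}_{j=1}^l respectively, and let ζ ∈ ℂ^n ⊗ ℂ^m be any purification of σ. Then the superfidelity of the two channel outputs on the purification satisfies G((Φ⊗1_m)(|ζ⟩⟨ζ|), (Ψ⊗1_m)(|ζ⟩⟨ζ|)) = Σ_{i,j} |Tr(σ A_i† B_j)|² + √(1 − Σ_{i,j} |Tr(σ A_i† A_j)|²) · √(1 − Σ_{i,j} |Tr(σ B_i† B_j)|²). In particular the value is independent of the choice of purification, so the quantum channel superfidelity G_ch(Φ,Ψ;σ) (the infimum of the left-hand side over all purifications of σ) equals the right-hand side. -/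
open Kronecker Matrix ComplexOrder

/-- Superfidelity of two density operators:
`G(ρ,σ) = Tr(ρσ) + √(1 − Tr ρ²)·√(1 − Tr σ²)` (real part of the traces). -/
noncomputable def superG {d : Type*} [Fintype d] (ρ σ : Matrix d d ℂ) : ℝ :=
  ((ρ * σ).trace).re +
    Real.sqrt (1 - ((ρ * ρ).trace).re) * Real.sqrt (1 - ((σ * σ).trace).re)


lemma sandwich_vecMulVec {d : Type*} [Fintype d] (ζ : d → ℂ) (M : Matrix d d ℂ) :
    M * vecMulVec ζ (star ζ) * Mᴴ = vecMulVec (M *ᵥ ζ) (star (M *ᵥ ζ)) := by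
  ext p q
  simp [Matrix.mul_apply, vecMulVec_apply, mulVec, dotProduct, conjTranspose_apply,
    Finset.sum_mul, Finset.mul_sum, star_sum]
  apply Finset.sum_congr rfl; intro x _
  apply Finset.sum_congr rfl; intro y _
  ring

lemma trace_vecMulVec_mul {d : Type*} [Fintype d] (a b : d → ℂ) :
    (vecMulVec a (star a) * vecMulVec b (star b)).trace = (star a ⬝ᵥ b) * (star b ⬝ᵥ a) := by
  simp [trace, diag, mul_apply, vecMulVec_apply, dotProduct, Finset.sum_mul, Finset.mul_sum]
  apply Finset.sum_congr rfl; intro x _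
  apply Finset.sum_congr rfl; intro y _
  ring

lemma kron_one_conjTranspose {n m : ℕ} (M : Matrix (Fin n) (Fin n) ℂ) :
    (M ⊗ₖ (1 : Matrix (Fin m) (Fin m) ℂ))ᴴ = Mᴴ ⊗ₖ (1 : Matrix (Fin m) (Fin m) ℂ) := by
  ext ⟨a, b⟩ ⟨a', b'⟩
  simp [conjTranspose_apply, Matrix.one_apply, eq_comm]
  split <;> simp

lemma dot_kron {n m : ℕ} (σ : Matrix (Fin n) (Fin n) ℂ) (ζ : Fin n × Fin m → ℂ)
    (hζ : ∀ i i' : Fin n, ∑ j : Fin m, ζ (i, j) * star (ζ (i', j)) = σ i i')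
    (C : Matrix (Fin n) (Fin n) ℂ) :
    star ζ ⬝ᵥ ((C ⊗ₖ (1 : Matrix (Fin m) (Fin m) ℂ)) *ᵥ ζ) = (σ * C).trace := by
  rw [show (σ * C).trace = ∑ a, ∑ a', σ a a' * C a' a from by simp [trace, diag, mul_apply]]
  conv_rhs => rw [Finset.sum_comm]
  simp only [← hζ]
  simp [dotProduct, mulVec, Fintype.sum_prod_type, Matrix.one_apply, Finset.mul_sum,
    Finset.sum_mul]
  refine Finset.sum_congr rfl fun p _ => ?_
  rw [Finset.sum_comm]
  refine Finset.sum_congr rfl fun q _ => Finset.sum_congr rfl fun b _ => ?_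
  ring

lemma trace_piece {n m : ℕ} (σ : Matrix (Fin n) (Fin n) ℂ) (ζ : Fin n × Fin m → ℂ)
    (hζ : ∀ i i' : Fin n, ∑ j : Fin m, ζ (i, j) * star (ζ (i', j)) = σ i i')
    (M N : Matrix (Fin n) (Fin n) ℂ) :
    (((M ⊗ₖ (1 : Matrix (Fin m) (Fin m) ℂ)) * vecMulVec ζ (star ζ) *
        (M ⊗ₖ (1 : Matrix (Fin m) (Fin m) ℂ))ᴴ) *
      ((N ⊗ₖ (1 : Matrix (Fin m) (Fin m) ℂ)) * vecMulVec ζ (star ζ) *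
        (N ⊗ₖ (1 : Matrix (Fin m) (Fin m) ℂ))ᴴ)).trace
      = (‖(σ * Mᴴ * N).trace‖ ^ 2 : ℝ) := by
  rw [sandwich_vecMulVec, sandwich_vecMulVec, trace_vecMulVec_mul]
  have key : ∀ P Q : Matrix (Fin n) (Fin n) ℂ,
      star ((P ⊗ₖ (1 : Matrix (Fin m) (Fin m) ℂ)) *ᵥ ζ) ⬝ᵥ
        ((Q ⊗ₖ (1 : Matrix (Fin m) (Fin m) ℂ)) *ᵥ ζ) = (σ * (Pᴴ * Q)).trace := by
    intro P Q
    rw [star_mulVec, dotProduct_mulVec, vecMul_vecMul, ← dotProduct_mulVec,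
      kron_one_conjTranspose, ← Matrix.mul_kronecker_mul]
    simp only [Matrix.one_mul]
    exact dot_kron σ ζ hζ (Pᴴ * Q)
  rw [key M N, key N M]
  have h2 : (σ * (Nᴴ * M)).trace = star ((σ * (Mᴴ * N)).trace) := by
    have : star ζ ⬝ᵥ (((Nᴴ * M) ⊗ₖ (1 : Matrix (Fin m) (Fin m) ℂ)) *ᵥ ζ)
        = star (star ζ ⬝ᵥ (((Mᴴ * N) ⊗ₖ (1 : Matrix (Fin m) (Fin m) ℂ)) *ᵥ ζ)) := by
      rw [star_dotProduct, star_mulVec, kron_one_conjTranspose, conjTranspose_mul,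
        conjTranspose_conjTranspose]
      rw [dotProduct_mulVec]
    rw [← dot_kron σ ζ hζ, ← dot_kron σ ζ hζ, this]
  rw [h2, ← Matrix.mul_assoc]
  rw [show (star ((σ * Mᴴ * N).trace)) = (starRingEnd ℂ) ((σ * Mᴴ * N).trace) from rfl,
    Complex.mul_conj]
  norm_cast
  rw [Complex.normSq_eq_norm_sq]

/-- **Channel superfidelity** (Theorem 1).  For any purification `ζ ∈ ℂⁿ ⊗ ℂᵐ` of a density
operator `σ`, the superfidelity of the outputs of the extended channels `Φ ⊗ 1` and `Ψ ⊗ 1`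
(with Kraus operators `{A i}` and `{B j}`) on `|ζ⟩⟨ζ|` equals
`Σ_{i,j} |Tr(σ A_i† B_j)|² + √(1 − Σ_{i,j} |Tr(σ A_i† A_j)|²)·√(1 − Σ_{i,j} |Tr(σ B_i† B_j)|²)`.
In particular the value is independent of the purification, so the infimum over all
purifications (the channel superfidelity `G_ch(Φ,Ψ;σ)`) equals the right-hand side. -/
theorem channel_superfidelity
    (n m k l : ℕ)
    (σ : Matrix (Fin n) (Fin n) ℂ)
    (hσ : σ.PosSemidef) (hσtr : σ.trace = 1)
    (A : Fin k → Matrix (Fin n) (Fin n) ℂ)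
    (B : Fin l → Matrix (Fin n) (Fin n) ℂ)
    (hA : ∑ i, (A i)ᴴ * A i = 1)
    (hB : ∑ j, (B j)ᴴ * B j = 1)
    (ζ : Fin n × Fin m → ℂ)
    (hζunit : ∑ p, ‖ζ p‖ ^ 2 = 1)
    (hζ : ∀ i i' : Fin n, ∑ j : Fin m, ζ (i, j) * star (ζ (i', j)) = σ i i') :
    superG
      (∑ i, (A i ⊗ₖ (1 : Matrix (Fin m) (Fin m) ℂ)) * Matrix.vecMulVec ζ (star ζ) *
        (A i ⊗ₖ (1 : Matrix (Fin m) (Fin m) ℂ))ᴴ)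
      (∑ j, (B j ⊗ₖ (1 : Matrix (Fin m) (Fin m) ℂ)) * Matrix.vecMulVec ζ (star ζ) *
        (B j ⊗ₖ (1 : Matrix (Fin m) (Fin m) ℂ))ᴴ) =
    (∑ i, ∑ j, ‖(σ * (A i)ᴴ * B j).trace‖ ^ 2) +
      Real.sqrt (1 - ∑ i, ∑ j, ‖(σ * (A i)ᴴ * A j).trace‖ ^ 2) *
        Real.sqrt (1 - ∑ i, ∑ j, ‖(σ * (B i)ᴴ * B j).trace‖ ^ 2) := by
  have main : ∀ {k l : ℕ} (A : Fin k → Matrix (Fin n) (Fin n) ℂ)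
      (B : Fin l → Matrix (Fin n) (Fin n) ℂ),
      (((∑ i, (A i ⊗ₖ (1 : Matrix (Fin m) (Fin m) ℂ)) * Matrix.vecMulVec ζ (star ζ) *
        (A i ⊗ₖ (1 : Matrix (Fin m) (Fin m) ℂ))ᴴ) *
        (∑ j, (B j ⊗ₖ (1 : Matrix (Fin m) (Fin m) ℂ)) * Matrix.vecMulVec ζ (star ζ) *
        (B j ⊗ₖ (1 : Matrix (Fin m) (Fin m) ℂ))ᴴ)).trace).re
      = ∑ i, ∑ j, ‖(σ * (A i)ᴴ * B j).trace‖ ^ 2 := by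
    intro k l A B
    rw [Finset.sum_mul_sum, Matrix.trace_sum]
    simp_rw [Matrix.trace_sum, trace_piece σ ζ hζ]
    norm_cast
  unfold superG
  rw [main A B, main A A, main B B]
end

section
/- Let σ be a density operator on ℂ^n, let Φ and Ψ be quantum channels on n×n complex matrices with Kraus operators {A_i}_{i=1}^k and {B_j}_{j=1}^l respectively, and let ζ ∈ ℂ^n ⊗ ℂ^m be any purification of σ. Then Tr[(Φ⊗1_m)(|ζ⟩⟨ζ|) · (Ψ⊗1_m)(|ζ⟩⟨ζ|)] = Σ_{i,j} |Tr(σ A_i† B_j)|². -/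
open Kronecker Matrix ComplexOrder

section aux
variable {α : Type*} [CommRing α] [StarRing α] {p q : Type*} [Fintype p] [Fintype q]

omit [StarRing α] in
private lemma aux_mul_vecMulVec (M : Matrix p p α) (u v : p → α) :
    M * vecMulVec u v = vecMulVec (M *ᵥ u) v := by
  ext i j
  simp [mul_apply, vecMulVec_apply, mulVec, dotProduct, Finset.sum_mul, mul_assoc]

omit [StarRing α] in
private lemma aux_vecMulVec_mul (M : Matrix p p α) (u v : p → α) :
    vecMulVec u v * M = vecMulVec u (v ᵥ* M) := by
  ext i j
  simp [mul_apply, vecMulVec_apply, vecMul, dotProduct, Finset.mul_sum, mul_assoc]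

omit [StarRing α] in
private lemma aux_trace_vecMulVec_mul (a b c d : p → α) :
    (vecMulVec a b * vecMulVec c d).trace = (b ⬝ᵥ c) * (a ⬝ᵥ d) := by
  simp only [trace, diag_apply, mul_apply, vecMulVec_apply, dotProduct]
  rw [Finset.sum_mul_sum, Finset.sum_comm]
  apply Finset.sum_congr rfl; intros; apply Finset.sum_congr rfl; intros; ring

private lemma aux_conj_quad (M : Matrix p p α) (ζ : p → α) :
    star ζ ⬝ᵥ (Mᴴ *ᵥ ζ) = star (star ζ ⬝ᵥ (M *ᵥ ζ)) := by
  simp only [dotProduct, mulVec, star_sum, star_mul', Pi.star_apply, conjTranspose_apply,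
    star_star, Finset.mul_sum]
  rw [Finset.sum_comm]
  apply Finset.sum_congr rfl; intros; apply Finset.sum_congr rfl; intros; ring

omit [Fintype p] [Fintype q] in
private lemma aux_kron_conjTranspose (M : Matrix p p α) (N : Matrix q q α) :
    (M ⊗ₖ N)ᴴ = Mᴴ ⊗ₖ Nᴴ := by
  ext ⟨i, j⟩ ⟨i', j'⟩
  simp [conjTranspose_apply, mul_comm]

end aux

/-- For any purification `ζ ∈ ℂⁿ ⊗ ℂᵐ` of a density operator `σ` and quantum channels with
Kraus operators `{A i}`, `{B j}`, the overlap of the two extended-channel outputs satisfies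
`Tr[(Φ⊗1)(|ζ⟩⟨ζ|)·(Ψ⊗1)(|ζ⟩⟨ζ|)] = Σ_{i,j} |Tr(σ A_i† B_j)|²`. -/
theorem channel_output_overlap
    (n m k l : ℕ)
    (σ : Matrix (Fin n) (Fin n) ℂ)
    (hσ : σ.PosSemidef) (hσtr : σ.trace = 1)
    (A : Fin k → Matrix (Fin n) (Fin n) ℂ)
    (B : Fin l → Matrix (Fin n) (Fin n) ℂ)
    (hA : ∑ i, (A i)ᴴ * A i = 1)
    (hB : ∑ j, (B j)ᴴ * B j = 1)
    (ζ : Fin n × Fin m → ℂ)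
    (hζunit : ∑ p, ‖ζ p‖ ^ 2 = 1)
    (hζ : ∀ i i' : Fin n, ∑ j : Fin m, ζ (i, j) * star (ζ (i', j)) = σ i i') :
    ((∑ i, (A i ⊗ₖ (1 : Matrix (Fin m) (Fin m) ℂ)) * Matrix.vecMulVec ζ (star ζ) *
        (A i ⊗ₖ (1 : Matrix (Fin m) (Fin m) ℂ))ᴴ) *
      (∑ j, (B j ⊗ₖ (1 : Matrix (Fin m) (Fin m) ℂ)) * Matrix.vecMulVec ζ (star ζ) *
        (B j ⊗ₖ (1 : Matrix (Fin m) (Fin m) ℂ))ᴴ)).trace =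
    ((∑ i, ∑ j, ‖(σ * (A i)ᴴ * B j).trace‖ ^ 2 : ℝ) : ℂ) := by
  have quad : ∀ M : Matrix (Fin n) (Fin n) ℂ,
      star ζ ⬝ᵥ ((M ⊗ₖ (1 : Matrix (Fin m) (Fin m) ℂ)) *ᵥ ζ) = (σ * M).trace := by
    intro M
    simp only [dotProduct, mulVec, kroneckerMap_apply, Fintype.sum_prod_type, one_apply,
      mul_ite, mul_one, mul_zero, ite_mul, zero_mul, Finset.sum_ite_eq, Finset.sum_ite_eq',
      Finset.mem_univ, if_true, trace, diag_apply, mul_apply, Pi.star_apply, ← hζ,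
      Finset.sum_mul, Finset.mul_sum]
    calc ∑ a : Fin n, ∑ y : Fin m, ∑ b : Fin n, star (ζ (a, y)) * (M a b * ζ (b, y))
        = ∑ a : Fin n, ∑ b : Fin n, ∑ y : Fin m, star (ζ (a, y)) * (M a b * ζ (b, y)) :=
          Finset.sum_congr rfl fun a _ => Finset.sum_comm
      _ = ∑ b : Fin n, ∑ a : Fin n, ∑ y : Fin m, star (ζ (a, y)) * (M a b * ζ (b, y)) :=
          Finset.sum_comm
      _ = ∑ x : Fin n, ∑ x_1 : Fin n, ∑ i : Fin m, ζ (x, i) * star (ζ (x_1, i)) * M x_1 x :=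
          Finset.sum_congr rfl fun b _ => Finset.sum_congr rfl fun a _ =>
            Finset.sum_congr rfl fun y _ => by ring
  rw [Finset.sum_mul_sum]
  simp only [trace_sum]
  push_cast
  refine Finset.sum_congr rfl fun i _ => Finset.sum_congr rfl fun j _ => ?_
  set P : Matrix (Fin n × Fin m) (Fin n × Fin m) ℂ := A i ⊗ₖ 1 with hP
  set Q : Matrix (Fin n × Fin m) (Fin n × Fin m) ℂ := B j ⊗ₖ 1 with hQ
  have hPQ : Pᴴ * Q = ((A i)ᴴ * B j) ⊗ₖ (1 : Matrix (Fin m) (Fin m) ℂ) := by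
    rw [hP, hQ, aux_kron_conjTranspose, conjTranspose_one, ← mul_kronecker_mul, one_mul]
  have hbc : (star ζ ᵥ* Pᴴ) ⬝ᵥ (Q *ᵥ ζ) = (σ * ((A i)ᴴ * B j)).trace := by
    rw [← dotProduct_mulVec, mulVec_mulVec, hPQ, quad]
  have had : (P *ᵥ ζ) ⬝ᵥ (star ζ ᵥ* Qᴴ) = star ((σ * ((A i)ᴴ * B j)).trace) := by
    rw [dotProduct_comm, ← dotProduct_mulVec, mulVec_mulVec,
      show Qᴴ * P = (Pᴴ * Q)ᴴ by rw [conjTranspose_mul, conjTranspose_conjTranspose],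
      aux_conj_quad, hPQ, quad]
  rw [aux_mul_vecMulVec P ζ (star ζ), aux_mul_vecMulVec Q ζ (star ζ),
    aux_vecMulVec_mul Pᴴ (P *ᵥ ζ) (star ζ), aux_vecMulVec_mul Qᴴ (Q *ᵥ ζ) (star ζ),
    aux_trace_vecMulVec_mul, hbc, had, ← mul_assoc σ]
  simp [Complex.star_def, Complex.mul_conj, Complex.normSq_eq_norm_sq]
end

section
/- Let σ be a density operator on ℂ^n, let U be an n×n unitary matrix, let Φ be the unitary channel Φ(X) = U X U†, and let Ψ be a quantum channel with Kraus operators {A_i}_{i=1}^k. Then for every purification ζ ∈ ℂ^n ⊗ ℂ^m of σ, the superfidelity of the channel outputs satisfies G((Φ⊗1_m)(|ζ⟩⟨ζ|), (Ψ⊗1_m)(|ζ⟩⟨ζ|)) = Σ_i |Tr(σ U† A_i)|²; hence the quantum channel superfidelity G_ch(Φ,Ψ;σ) equals Σ_i |Tr(σ U† A_i)|². -/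
open Kronecker Matrix ComplexOrder

lemma aux_trace {p : Type*} [Fintype p] (v : p → ℂ) (B C : Matrix p p ℂ) :
    ((Matrix.vecMulVec v (star v)) * B * (Matrix.vecMulVec v (star v)) * C).trace
      = (star v ⬝ᵥ B *ᵥ v) * (star v ⬝ᵥ C *ᵥ v) := by
  simp only [Matrix.trace, Matrix.diag, Matrix.mul_apply, Matrix.vecMulVec_apply,
    dotProduct, Matrix.mulVec, Pi.star_apply, Finset.sum_mul, Finset.mul_sum]
  rw [Finset.sum_comm]
  refine Finset.sum_congr rfl fun a _ => Finset.sum_congr rfl fun x _ => ?_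
  rw [Finset.sum_comm]
  exact Finset.sum_congr rfl fun b _ => Finset.sum_congr rfl fun c _ => by ring

lemma aux_main {p : Type*} [Fintype p] (v : p → ℂ) (Q B : Matrix p p ℂ) :
    (Q * Matrix.vecMulVec v (star v) * Qᴴ *
        (B * Matrix.vecMulVec v (star v) * Bᴴ)).trace
      = (star v ⬝ᵥ (Qᴴ * B) *ᵥ v) * (star v ⬝ᵥ (Bᴴ * Q) *ᵥ v) := by
  have e : Q * Matrix.vecMulVec v (star v) * Qᴴ *
      (B * Matrix.vecMulVec v (star v) * Bᴴ)
      = Q * (Matrix.vecMulVec v (star v) * (Qᴴ * B) * Matrix.vecMulVec v (star v) * Bᴴ) := by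
    simp only [Matrix.mul_assoc]
  rw [e, Matrix.trace_mul_comm,
    Matrix.mul_assoc (Matrix.vecMulVec v (star v) * (Qᴴ * B) * Matrix.vecMulVec v (star v)),
    aux_trace]

lemma aux_kron_ct {n m : ℕ} (B : Matrix (Fin n) (Fin n) ℂ) :
    (B ⊗ₖ (1 : Matrix (Fin m) (Fin m) ℂ))ᴴ = Bᴴ ⊗ₖ (1 : Matrix (Fin m) (Fin m) ℂ) := by
  ext ⟨a, b⟩ ⟨c, d⟩
  by_cases h : b = d <;>
    simp [Matrix.conjTranspose_apply, Matrix.one_apply, h, eq_comm]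

lemma aux_dot {n m : ℕ} (ζ : Fin n × Fin m → ℂ) (σ M : Matrix (Fin n) (Fin n) ℂ)
    (hζ : ∀ i i' : Fin n, ∑ j : Fin m, ζ (i, j) * star (ζ (i', j)) = σ i i') :
    star ζ ⬝ᵥ ((M ⊗ₖ (1 : Matrix (Fin m) (Fin m) ℂ)) *ᵥ ζ) = (σ * M).trace := by
  simp only [dotProduct, Matrix.mulVec, Pi.star_apply, Matrix.trace, Matrix.diag,
    Matrix.mul_apply, Fintype.sum_prod_type, kroneckerMap_apply, Matrix.one_apply]
  have : ∀ (a : Fin n) (j : Fin m),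
      (∑ b : Fin n, ∑ j' : Fin m, M a b * (if j = j' then (1:ℂ) else 0) * ζ (b, j'))
        = ∑ b : Fin n, M a b * ζ (b, j) := by
    intro a j
    refine Finset.sum_congr rfl fun b _ => ?_
    simp [Finset.sum_ite_eq ]
  calc ∑ a : Fin n, ∑ j : Fin m, star (ζ (a, j)) *
          ∑ b : Fin n, ∑ j' : Fin m, M a b * (if j = j' then (1:ℂ) else 0) * ζ (b, j')
      = ∑ a : Fin n, ∑ b : Fin n, M a b * ∑ j : Fin m, ζ (b, j) * star (ζ (a, j)) := by
        simp only [this, Finset.mul_sum]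
        refine Finset.sum_congr rfl fun a _ => ?_
        rw [Finset.sum_comm]
        exact Finset.sum_congr rfl fun b _ => Finset.sum_congr rfl fun j _ => by ring
    _ = ∑ a : Fin n, ∑ b : Fin n, M a b * σ b a := by
        simp only [RCLike.star_def] at hζ
        simp [hζ]
    _ = ∑ a : Fin n, ∑ b : Fin n, σ a b * M b a := by
        rw [Finset.sum_comm]; exact Finset.sum_congr rfl fun a _ =>
          Finset.sum_congr rfl fun b _ => by ring

/-- If `Φ` is the unitary channel `X ↦ U X Uᴴ` and `Ψ` is any quantum channel with Kraus
operators `{A i}`, then for every purification `ζ` of a density operator `σ` the superfidelity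
of the extended channel outputs equals `Σᵢ |Tr(σ Uᴴ Aᵢ)|²`; hence the channel superfidelity
`G_ch(Φ,Ψ;σ)` (the infimum over all purifications) equals `Σᵢ |Tr(σ Uᴴ Aᵢ)|²`. -/
theorem channel_superfidelity_unitary
    (n m k : ℕ)
    (σ : Matrix (Fin n) (Fin n) ℂ)
    (hσ : σ.PosSemidef) (hσtr : σ.trace = 1)
    (U : Matrix (Fin n) (Fin n) ℂ)
    (hU : U ∈ Matrix.unitaryGroup (Fin n) ℂ)
    (A : Fin k → Matrix (Fin n) (Fin n) ℂ)
    (hA : ∑ i, (A i)ᴴ * A i = 1)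
    (ζ : Fin n × Fin m → ℂ)
    (hζunit : ∑ p, ‖ζ p‖ ^ 2 = 1)
    (hζ : ∀ i i' : Fin n, ∑ j : Fin m, ζ (i, j) * star (ζ (i', j)) = σ i i') :
    superG
      ((U ⊗ₖ (1 : Matrix (Fin m) (Fin m) ℂ)) * Matrix.vecMulVec ζ (star ζ) *
        (U ⊗ₖ (1 : Matrix (Fin m) (Fin m) ℂ))ᴴ)
      (∑ i, (A i ⊗ₖ (1 : Matrix (Fin m) (Fin m) ℂ)) * Matrix.vecMulVec ζ (star ζ) *
        (A i ⊗ₖ (1 : Matrix (Fin m) (Fin m) ℂ))ᴴ) =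
    ∑ i, ‖(σ * Uᴴ * A i).trace‖ ^ 2 := by
  have hU' : Uᴴ * U = 1 := Matrix.mem_unitaryGroup_iff'.mp hU
  have hQ : (U ⊗ₖ (1 : Matrix (Fin m) (Fin m) ℂ))ᴴ * (U ⊗ₖ (1 : Matrix (Fin m) (Fin m) ℂ))
      = 1 := by
    rw [aux_kron_ct, ← Matrix.mul_kronecker_mul, hU', Matrix.one_mul,
      Matrix.one_kronecker_one]
  have hdot1 : star ζ ⬝ᵥ ζ = 1 := by
    have h : ∀ p, star (ζ p) * ζ p = ((‖ζ p‖ ^ 2 : ℝ) : ℂ) := fun p => by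
      rw [mul_comm, Complex.star_def, Complex.mul_conj, Complex.normSq_eq_norm_sq]
    rw [dotProduct]
    simp only [Pi.star_apply, h]
    rw [← Complex.ofReal_sum, hζunit, Complex.ofReal_one]
  -- purity of the first state
  have h1 : (((U ⊗ₖ (1 : Matrix (Fin m) (Fin m) ℂ)) * Matrix.vecMulVec ζ (star ζ) *
      (U ⊗ₖ (1 : Matrix (Fin m) (Fin m) ℂ))ᴴ) * ((U ⊗ₖ (1 : Matrix (Fin m) (Fin m) ℂ)) *
      Matrix.vecMulVec ζ (star ζ) * (U ⊗ₖ (1 : Matrix (Fin m) (Fin m) ℂ))ᴴ)).trace = 1 := by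
    rw [aux_main, hQ, Matrix.one_mulVec, hdot1, one_mul]
  -- cross terms
  have hcross : ∀ i : Fin k, (((U ⊗ₖ (1 : Matrix (Fin m) (Fin m) ℂ)) *
      Matrix.vecMulVec ζ (star ζ) * (U ⊗ₖ (1 : Matrix (Fin m) (Fin m) ℂ))ᴴ) *
      ((A i ⊗ₖ (1 : Matrix (Fin m) (Fin m) ℂ)) * Matrix.vecMulVec ζ (star ζ) *
        (A i ⊗ₖ (1 : Matrix (Fin m) (Fin m) ℂ))ᴴ)).trace
      = ((‖(σ * Uᴴ * A i).trace‖ ^ 2 : ℝ) : ℂ) := by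
    intro i
    have eB : (U ⊗ₖ (1 : Matrix (Fin m) (Fin m) ℂ))ᴴ * (A i ⊗ₖ (1 : Matrix (Fin m) (Fin m) ℂ))
        = (Uᴴ * A i) ⊗ₖ (1 : Matrix (Fin m) (Fin m) ℂ) := by
      rw [aux_kron_ct, ← Matrix.mul_kronecker_mul, Matrix.one_mul]
    have eC : (A i ⊗ₖ (1 : Matrix (Fin m) (Fin m) ℂ))ᴴ * (U ⊗ₖ (1 : Matrix (Fin m) (Fin m) ℂ))
        = ((A i)ᴴ * U) ⊗ₖ (1 : Matrix (Fin m) (Fin m) ℂ) := by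
      rw [aux_kron_ct, ← Matrix.mul_kronecker_mul, Matrix.one_mul]
    rw [aux_main, eB, eC, aux_dot ζ σ (Uᴴ * A i) hζ, aux_dot ζ σ ((A i)ᴴ * U) hζ]
    have hconj : (σ * ((A i)ᴴ * U)).trace = star ((σ * (Uᴴ * A i)).trace) := by
      calc (σ * ((A i)ᴴ * U)).trace = ((σ * (Uᴴ * A i))ᴴ).trace := by
            rw [Matrix.conjTranspose_mul, Matrix.conjTranspose_mul,
              Matrix.conjTranspose_conjTranspose, hσ.1, Matrix.trace_mul_comm,
              Matrix.mul_assoc]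
        _ = star ((σ * (Uᴴ * A i)).trace) := Matrix.trace_conjTranspose _
    rw [hconj, Matrix.mul_assoc σ, Complex.star_def, Complex.mul_conj,
      Complex.normSq_eq_norm_sq]
  have h2 : (((U ⊗ₖ (1 : Matrix (Fin m) (Fin m) ℂ)) * Matrix.vecMulVec ζ (star ζ) *
      (U ⊗ₖ (1 : Matrix (Fin m) (Fin m) ℂ))ᴴ) *
        ∑ i, (A i ⊗ₖ (1 : Matrix (Fin m) (Fin m) ℂ)) * Matrix.vecMulVec ζ (star ζ) *
          (A i ⊗ₖ (1 : Matrix (Fin m) (Fin m) ℂ))ᴴ).trace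
      = ((∑ i, ‖(σ * Uᴴ * A i).trace‖ ^ 2 : ℝ) : ℂ) := by
    rw [Matrix.mul_sum, Matrix.trace_sum]
    simp only [hcross]
    rw [← Complex.ofReal_sum]
  simp only [superG, h1, h2, Complex.one_re, sub_self, Real.sqrt_zero, zero_mul,
    add_zero, Complex.ofReal_re]
end

section
/- Let ψ ∈ ℂ^n be a unit vector and σ = |ψ⟩⟨ψ| the corresponding pure density operator, and let Φ and Ψ be quantum channels on n×n complex matrices with Kraus operators {A_i}_{i=1}^k and {B_j}_{j=1}^l. Then Σ_{i,j} |Tr(σ A_i† B_j)|² = Tr(Φ(σ)·Ψ(σ)), Σ_{i,j} |Tr(σ A_i† A_j)|² = Tr(Φ(σ)²), and Σ_{i,j} |Tr(σ B_i† B_j)|² = Tr(Ψ(σ)²); consequently the quantum channel superfidelity equals the superfidelity of the outputs on σ itself: G_ch(Φ,Ψ;σ) = G(Φ(σ), Ψ(σ)). -/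
open Matrix ComplexOrder

lemma sandwich {n : ℕ} (ψ : Fin n → ℂ) (X : Matrix (Fin n) (Fin n) ℂ) :
    vecMulVec ψ (star ψ) * X * vecMulVec ψ (star ψ) =
      (vecMulVec ψ (star ψ) * X).trace • vecMulVec ψ (star ψ) := by
  ext i j
  simp only [Matrix.mul_apply, Matrix.vecMulVec_apply, Matrix.trace, Matrix.diag,
    Matrix.smul_apply, smul_eq_mul, Finset.sum_mul, Finset.mul_sum, Pi.star_apply]
  refine Finset.sum_congr rfl fun a _ => Finset.sum_congr rfl fun b _ => by ring

lemma sigmaH {n : ℕ} (ψ : Fin n → ℂ) :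
    (vecMulVec ψ (star ψ))ᴴ = vecMulVec ψ (star ψ) := by
  ext i j
  simp [Matrix.vecMulVec_apply, mul_comm]

lemma normsq (c : ℂ) : ((‖c‖^2 : ℝ) : ℂ) = c * star c := by
  rw [show (star c) = (starRingEnd ℂ) c from rfl, Complex.mul_conj]
  norm_cast
  simp [Complex.sq_norm]

lemma key_trace {n : ℕ} (ψ : Fin n → ℂ) (M N : Matrix (Fin n) (Fin n) ℂ) :
    ((‖(vecMulVec ψ (star ψ) * Mᴴ * N).trace‖ ^ 2 : ℝ) : ℂ) =
      ((M * vecMulVec ψ (star ψ) * Mᴴ) * (N * vecMulVec ψ (star ψ) * Nᴴ)).trace := by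
  have hs : ∀ σ : Matrix (Fin n) (Fin n) ℂ, σ = vecMulVec ψ (star ψ) →
      ((‖(σ * Mᴴ * N).trace‖ ^ 2 : ℝ) : ℂ) = ((M * σ * Mᴴ) * (N * σ * Nᴴ)).trace := by
    intro σ hσ
    have h1 : (M * σ * Mᴴ * (N * σ * Nᴴ)).trace
        = ((σ * Mᴴ * N) * σ * (Nᴴ * M)).trace := by
      rw [show M * σ * Mᴴ * (N * σ * Nᴴ) = M * (σ * Mᴴ * N * σ * Nᴴ) by
        simp only [Matrix.mul_assoc], Matrix.trace_mul_comm, Matrix.mul_assoc]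
    have h2 : (σ * (Nᴴ * M)).trace = star ((σ * Mᴴ * N).trace) := by
      rw [← Matrix.trace_conjTranspose]
      rw [show (σ * Mᴴ * N)ᴴ = Nᴴ * (M * σᴴ) by
        simp only [Matrix.conjTranspose_mul, Matrix.conjTranspose_conjTranspose,
          Matrix.mul_assoc], hσ, sigmaH, ← hσ, Matrix.trace_mul_comm, Matrix.mul_assoc]
    rw [h1, hσ]
    rw [show vecMulVec ψ (star ψ) * Mᴴ * N = vecMulVec ψ (star ψ) * (Mᴴ * N) by
      rw [Matrix.mul_assoc], sandwich, Matrix.smul_mul, Matrix.trace_smul, smul_eq_mul, ← hσ]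
    rw [show σ * (Mᴴ * N) = σ * Mᴴ * N by rw [Matrix.mul_assoc], h2]
    exact normsq _
  exact hs _ rfl

lemma key_sum {n k l : ℕ} (ψ : Fin n → ℂ) (σ : Matrix (Fin n) (Fin n) ℂ)
    (hσ : σ = Matrix.vecMulVec ψ (star ψ))
    (M : Fin k → Matrix (Fin n) (Fin n) ℂ) (N : Fin l → Matrix (Fin n) (Fin n) ℂ) :
    ((∑ i, ∑ j, ‖(σ * (M i)ᴴ * N j).trace‖ ^ 2 : ℝ) : ℂ) =
      ((∑ i, M i * σ * (M i)ᴴ) * (∑ j, N j * σ * (N j)ᴴ)).trace := by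
  rw [Finset.sum_mul_sum, Matrix.trace_sum]
  push_cast
  refine Finset.sum_congr rfl fun i _ => ?_
  rw [Matrix.trace_sum]
  exact Finset.sum_congr rfl fun j _ => by rw [hσ]; exact_mod_cast key_trace ψ (M i) (N j)

/-- For a pure state `σ = |ψ⟩⟨ψ|` and quantum channels with Kraus operators `{A i}`, `{B j}`:
`Σ_{i,j} |Tr(σ Aᵢᴴ Bⱼ)|² = Tr(Φ(σ)·Ψ(σ))`, `Σ_{i,j} |Tr(σ Aᵢᴴ Aⱼ)|² = Tr(Φ(σ)²)`,
`Σ_{i,j} |Tr(σ Bᵢᴴ Bⱼ)|² = Tr(Ψ(σ)²)`; consequently the channel superfidelity (given by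
the closed formula) equals the superfidelity of the outputs on `σ` itself:
`G_ch(Φ,Ψ;σ) = G(Φ(σ), Ψ(σ))`. -/
theorem channel_superfidelity_pure_state
    (n k l : ℕ)
    (ψ : Fin n → ℂ)
    (hψ : ∑ i, ‖ψ i‖ ^ 2 = 1)
    (σ : Matrix (Fin n) (Fin n) ℂ)
    (hσ : σ = Matrix.vecMulVec ψ (star ψ))
    (A : Fin k → Matrix (Fin n) (Fin n) ℂ)
    (B : Fin l → Matrix (Fin n) (Fin n) ℂ)
    (hA : ∑ i, (A i)ᴴ * A i = 1)
    (hB : ∑ j, (B j)ᴴ * B j = 1) :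
    ((∑ i, ∑ j, ‖(σ * (A i)ᴴ * B j).trace‖ ^ 2 : ℝ) : ℂ) =
        ((∑ i, A i * σ * (A i)ᴴ) * (∑ j, B j * σ * (B j)ᴴ)).trace ∧
    ((∑ i, ∑ j, ‖(σ * (A i)ᴴ * A j).trace‖ ^ 2 : ℝ) : ℂ) =
        ((∑ i, A i * σ * (A i)ᴴ) * (∑ j, A j * σ * (A j)ᴴ)).trace ∧
    ((∑ i, ∑ j, ‖(σ * (B i)ᴴ * B j).trace‖ ^ 2 : ℝ) : ℂ) =
        ((∑ i, B i * σ * (B i)ᴴ) * (∑ j, B j * σ * (B j)ᴴ)).trace ∧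
    (∑ i, ∑ j, ‖(σ * (A i)ᴴ * B j).trace‖ ^ 2) +
        Real.sqrt (1 - ∑ i, ∑ j, ‖(σ * (A i)ᴴ * A j).trace‖ ^ 2) *
          Real.sqrt (1 - ∑ i, ∑ j, ‖(σ * (B i)ᴴ * B j).trace‖ ^ 2) =
      superG (∑ i, A i * σ * (A i)ᴴ) (∑ j, B j * σ * (B j)ᴴ) := by
  have h1 := key_sum ψ σ hσ A B
  have h2 := key_sum ψ σ hσ A A
  have h3 := key_sum ψ σ hσ B B
  refine ⟨h1, h2, h3, ?_⟩
  unfold superG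
  rw [← h1, ← h2, ← h3, Complex.ofReal_re, Complex.ofReal_re, Complex.ofReal_re]
end

section
/- Let σ and ξ be density operators on ℂ^n, with spectral decomposition ξ = Σ_i λ_i |λ_i⟩⟨λ_i| (orthonormal eigenvectors |λ_i⟩). Let Φ be the erasure channel with Kraus operators A_{ij} = √λ_i |λ_i⟩⟨j| (so Φ(X) = Tr(X)·ξ), and let Ψ be the unitary channel Ψ(X) = U X U† for a unitary U. Then the quantum channel superfidelity satisfies G_ch(Φ,Ψ;σ) = Σ_{i,j} λ_i |⟨j| σ U† |λ_i⟩|² = Tr(σ² U† ξ U). -/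
open Matrix ComplexOrder

/-- Let `σ`, `ξ` be density operators on `ℂⁿ`, with `ξ = Σᵢ λᵢ |λᵢ⟩⟨λᵢ|` a spectral
decomposition (orthonormal eigenvectors `v i = |λᵢ⟩`, nonnegative eigenvalues `λ i`).
Let `Φ` be the erasure channel with Kraus operators `A_{ij} = √λᵢ |λᵢ⟩⟨j|` (so
`Φ(X) = Tr(X)·ξ`), and `Ψ` the unitary channel `X ↦ U X Uᴴ`.  Then the channel
superfidelity (given by the closed formula, with the Kraus family of `Ψ` being the single
operator `U`) satisfies
`G_ch(Φ,Ψ;σ) = Σ_{i,j} λᵢ |⟨j| σ Uᴴ |λᵢ⟩|² = Tr(σ² Uᴴ ξ U)`. -/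
theorem channel_superfidelity_erasure
    (n : ℕ)
    (σ ξ : Matrix (Fin n) (Fin n) ℂ)
    (hσ : σ.PosSemidef) (hσtr : σ.trace = 1)
    (hξ : ξ.PosSemidef) (hξtr : ξ.trace = 1)
    (lam : Fin n → ℝ) (hlam : ∀ i, 0 ≤ lam i)
    (v : Fin n → (Fin n → ℂ))
    (hortho : ∀ i i', star (v i) ⬝ᵥ v i' = if i = i' then 1 else 0)
    (hspec : ξ = ∑ i, ((lam i : ℝ) : ℂ) • Matrix.vecMulVec (v i) (star (v i)))
    (U : Matrix (Fin n) (Fin n) ℂ)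
    (hU : U ∈ Matrix.unitaryGroup (Fin n) ℂ)
    (A : Fin n × Fin n → Matrix (Fin n) (Fin n) ℂ)
    (hAdef : ∀ p, A p = ((Real.sqrt (lam p.1) : ℝ) : ℂ) •
      Matrix.vecMulVec (v p.1) (star (Pi.single p.2 1))) :
    ((∑ p, ∑ _q : Fin 1, ‖(σ * (A p)ᴴ * U).trace‖ ^ 2) +
        Real.sqrt (1 - ∑ p, ∑ q, ‖(σ * (A p)ᴴ * A q).trace‖ ^ 2) *
          Real.sqrt (1 - ∑ _p : Fin 1, ∑ _q : Fin 1, ‖(σ * Uᴴ * U).trace‖ ^ 2) =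
      ∑ i, ∑ j, lam i * ‖((σ * Uᴴ).mulVec (v i)) j‖ ^ 2) ∧
    ((∑ p, ∑ _q : Fin 1, ‖(σ * (A p)ᴴ * U).trace‖ ^ 2) +
        Real.sqrt (1 - ∑ p, ∑ q, ‖(σ * (A p)ᴴ * A q).trace‖ ^ 2) *
          Real.sqrt (1 - ∑ _p : Fin 1, ∑ _q : Fin 1, ‖(σ * Uᴴ * U).trace‖ ^ 2) =
      ((σ * σ * Uᴴ * ξ * U).trace).re) := by
  set w : Fin n → Fin n → ℂ := fun i => (σ * Uᴴ).mulVec (v i) with hw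
  have hherm : σᴴ = σ := hσ.1
  have hUU : Uᴴ * U = 1 := by
    have := hU.1
    simpa [Matrix.star_eq_conjTranspose] using this
  -- the correction term vanishes
  have hz : Real.sqrt (1 - ∑ _p : Fin 1, ∑ _q : Fin 1, ‖(σ * Uᴴ * U).trace‖ ^ 2) = 0 := by
    rw [mul_assoc, hUU, mul_one]
    simp [hσtr]
  -- trace of M * (vecMulVec a b)
  have htr : ∀ (M : Matrix (Fin n) (Fin n) ℂ) (a b : Fin n → ℂ),
      (M * vecMulVec a b).trace = b ⬝ᵥ M.mulVec a := by
    intro M a b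
    simp only [Matrix.trace, Matrix.diag, Matrix.mul_apply, vecMulVec_apply, dotProduct, mulVec,
      Finset.mul_sum, Finset.sum_mul]
    apply Finset.sum_congr rfl; intros; apply Finset.sum_congr rfl; intros; ring
  have hUσ : U * σ = (σ * Uᴴ)ᴴ := by
    rw [conjTranspose_mul, conjTranspose_conjTranspose, hherm]
  -- conjTranspose of the Kraus operators
  have hAH : ∀ p : Fin n × Fin n, (A p)ᴴ =
      ((Real.sqrt (lam p.1) : ℝ) : ℂ) • vecMulVec (Pi.single p.2 1) (star (v p.1)) := by
    intro p
    rw [hAdef]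
    ext a b
    simp only [conjTranspose_apply, Matrix.smul_apply, vecMulVec_apply, Pi.star_apply,
      smul_eq_mul, star_mul', Complex.star_def, Complex.conj_ofReal, star_star, Pi.single_apply]
    split_ifs <;> simp
  -- key identity for each trace
  have key1 : ∀ p : Fin n × Fin n, (σ * (A p)ᴴ * U).trace
      = ((Real.sqrt (lam p.1) : ℝ) : ℂ) * (starRingEnd ℂ) (w p.1 p.2) := by
    intro p
    rw [hAH, Matrix.mul_smul, Matrix.smul_mul, Matrix.trace_smul, smul_eq_mul]
    congr 1
    rw [Matrix.trace_mul_comm, ← mul_assoc, hUσ, htr]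
    simp only [hw, mulVec_single, mul_one, dotProduct, mulVec, Pi.star_apply,
      conjTranspose_apply, map_sum, _root_.map_mul, Complex.star_def, Pi.single_apply,
      mul_ite, mul_one, mul_zero, Finset.sum_ite_eq, Finset.sum_ite_eq', Finset.mem_univ,
      if_true]
    apply Finset.sum_congr rfl; intros; ring
  have hnorm1 : ∀ p : Fin n × Fin n,
      ‖(σ * (A p)ᴴ * U).trace‖ ^ 2 = lam p.1 * ‖w p.1 p.2‖ ^ 2 := by
    intro p
    rw [key1, norm_mul, mul_pow, Complex.norm_real, Real.norm_eq_abs,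
      abs_of_nonneg (Real.sqrt_nonneg _), Real.sq_sqrt (hlam p.1), RCLike.norm_conj]
  have hsum1 : (∑ p : Fin n × Fin n, ∑ _q : Fin 1, ‖(σ * (A p)ᴴ * U).trace‖ ^ 2)
      = ∑ i, ∑ j, lam i * ‖w i j‖ ^ 2 := by
    simp only [Fin.sum_univ_one]
    rw [Fintype.sum_prod_type]
    exact Finset.sum_congr rfl fun i _ => Finset.sum_congr rfl fun j _ => hnorm1 (i, j)
  -- second form
  have key2 : (σ * σ * Uᴴ * ξ * U).trace
      = ∑ i, ((lam i : ℝ) : ℂ) * (star (w i) ⬝ᵥ w i) := by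
    rw [hspec, Matrix.mul_sum, Matrix.sum_mul, Matrix.trace_sum]
    apply Finset.sum_congr rfl
    intro i _
    rw [Matrix.mul_smul, Matrix.smul_mul, Matrix.trace_smul, smul_eq_mul]
    congr 1
    rw [Matrix.trace_mul_comm, ← mul_assoc, htr]
    have hM : U * (σ * σ * Uᴴ) = (σ * Uᴴ)ᴴ * (σ * Uᴴ) := by
      rw [← hUσ]; noncomm_ring
    rw [hM, ← mulVec_mulVec, dotProduct_mulVec, ← star_mulVec]
  have hsq : ∀ (z : ℂ), star z * z = ((‖z‖ ^ 2 : ℝ) : ℂ) := by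
    intro z
    rw [show (star z : ℂ) = (starRingEnd ℂ) z from rfl, mul_comm, Complex.mul_conj]
    norm_cast
    rw [Complex.normSq_eq_norm_sq]
  have hre : ((σ * σ * Uᴴ * ξ * U).trace).re = ∑ i, ∑ j, lam i * ‖w i j‖ ^ 2 := by
    rw [key2, Complex.re_sum]
    apply Finset.sum_congr rfl
    intro i _
    have hdp : star (w i) ⬝ᵥ w i = ((∑ j, ‖w i j‖ ^ 2 : ℝ) : ℂ) := by
      push_cast
      simp only [dotProduct, Pi.star_apply]
      exact Finset.sum_congr rfl fun j _ => by rw [hsq]; push_cast; ring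
    rw [hdp, ← Complex.ofReal_mul, Complex.ofReal_re, Finset.mul_sum]
  rw [hz, mul_zero, add_zero, hsum1]
  exact ⟨rfl, hre.symm⟩
end

section
/- Let σ be a density operator on ℂ^n, let Φ be a quantum channel with Kraus operators {A_i}_{i=1}^k, let H be an n×n Hermitian matrix, ε ∈ ℝ, U_ε = exp(−iεH), and let Ψ be the channel Ψ(X) = U_ε Φ(X) U_ε† (with Kraus operators {U_ε A_i}). Then the quantum channel superfidelity satisfies G_ch(Φ,Ψ;σ) = 1 + Σ_{i,j} |Tr(σ A_i† U_ε A_j)|² − Σ_{i,j} |Tr(σ A_i† A_j)|². -/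
open Matrix ComplexOrder

/-- trace of `Mᴴ * N` is a Frobenius inner product. -/
private lemma trace_conjTranspose_mul (n : ℕ) (M N : Matrix (Fin n) (Fin n) ℂ) :
    (Mᴴ * N).trace = ∑ p : Fin n × Fin n, (starRingEnd ℂ) (M p.1 p.2) * N p.1 p.2 := by
  simp [Matrix.trace, Matrix.mul_apply, Matrix.diag, Matrix.conjTranspose_apply,
    Fintype.sum_prod_type]
  exact Finset.sum_comm

open scoped MatrixOrder in
/-- Key bound: the Gram sum of a Kraus family is at most 1. -/
private lemma gram_sum_le_one (n k : ℕ)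
    (σ : Matrix (Fin n) (Fin n) ℂ)
    (hσ : σ.PosSemidef) (hσtr : σ.trace = 1)
    (A : Fin k → Matrix (Fin n) (Fin n) ℂ)
    (hA : ∑ i, (A i)ᴴ * A i = 1) :
    ∑ i, ∑ j, ‖(σ * (A i)ᴴ * A j).trace‖ ^ 2 ≤ 1 := by
  set R := CFC.sqrt σ with hR
  have hRR : R * R = σ := CFC.sqrt_mul_sqrt_self σ hσ.nonneg
  have hRH : Rᴴ = R := (CFC.sqrt_nonneg σ).posSemidef.isHermitian
  set v : Fin k → EuclideanSpace ℂ (Fin n × Fin n) :=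
    fun i => WithLp.toLp 2 (fun p : Fin n × Fin n => (A i * R) p.1 p.2) with hv
  have htr : ∀ i j, (σ * (A i)ᴴ * A j).trace = (inner ℂ (v i) (v j) : ℂ) := by
    intro i j
    have h1 : σ * (A i)ᴴ * A j = R * (R * (A i)ᴴ * A j) := by
      rw [← hRR]; simp only [Matrix.mul_assoc]
    have h2 : (A i * R)ᴴ * (A j * R) = R * (A i)ᴴ * A j * R := by
      rw [conjTranspose_mul, hRH]; simp only [Matrix.mul_assoc]
    rw [h1, Matrix.trace_mul_comm, ← h2, trace_conjTranspose_mul]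
    simp [PiLp.inner_apply, RCLike.inner_apply, hv, mul_comm]
  have hsum : ∑ i, ‖v i‖ ^ 2 = 1 := by
    have hC : ((∑ i, ‖v i‖ ^ 2 : ℝ) : ℂ) = 1 := by
      push_cast
      have : ∀ i, ((‖v i‖ : ℂ)) ^ 2 = (σ * (A i)ᴴ * A i).trace := by
        intro i; rw [htr i i, inner_self_eq_norm_sq_to_K]; norm_num
      rw [Finset.sum_congr rfl fun i _ => this i]
      calc ∑ i, (σ * (A i)ᴴ * A i).trace
          = ∑ i, (σ * ((A i)ᴴ * A i)).trace := by simp only [Matrix.mul_assoc]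
        _ = (σ * ∑ i, (A i)ᴴ * A i).trace := by rw [← Matrix.trace_sum, ← Finset.mul_sum]
        _ = 1 := by rw [hA, mul_one, hσtr]
    exact_mod_cast hC
  calc ∑ i, ∑ j, ‖(σ * (A i)ᴴ * A j).trace‖ ^ 2
      ≤ ∑ i, ∑ j, ‖v i‖ ^ 2 * ‖v j‖ ^ 2 := by
        refine Finset.sum_le_sum fun i _ => Finset.sum_le_sum fun j _ => ?_
        rw [htr i j, ← mul_pow]
        exact pow_le_pow_left₀ (norm_nonneg _) (norm_inner_le_norm _ _) 2
    _ = (∑ i, ‖v i‖ ^ 2) * (∑ j, ‖v j‖ ^ 2) := by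
        rw [Finset.sum_mul]
        exact Finset.sum_congr rfl fun i _ => (Finset.mul_sum _ _ _).symm
    _ = 1 := by rw [hsum]; ring

/-- Let `Φ` be a quantum channel with Kraus operators `{A i}`, `H` Hermitian, `ε ∈ ℝ`,
`U_ε = exp(−iεH)`, and `Ψ(X) = U_ε Φ(X) U_εᴴ` (Kraus operators `{U_ε A i}`).  Then the
channel superfidelity (given by the closed formula) satisfies
`G_ch(Φ,Ψ;σ) = 1 + Σ_{i,j} |Tr(σ Aᵢᴴ U_ε Aⱼ)|² − Σ_{i,j} |Tr(σ Aᵢᴴ Aⱼ)|²`. -/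
theorem channel_superfidelity_unitary_error
    (n k : ℕ)
    (σ : Matrix (Fin n) (Fin n) ℂ)
    (hσ : σ.PosSemidef) (hσtr : σ.trace = 1)
    (A : Fin k → Matrix (Fin n) (Fin n) ℂ)
    (hA : ∑ i, (A i)ᴴ * A i = 1)
    (H : Matrix (Fin n) (Fin n) ℂ)
    (hH : H.IsHermitian)
    (ε : ℝ)
    (Uε : Matrix (Fin n) (Fin n) ℂ)
    (hUε : Uε = NormedSpace.exp ((-(Complex.I * (ε : ℂ))) • H)) :
    (∑ i, ∑ j, ‖(σ * (A i)ᴴ * (Uε * A j)).trace‖ ^ 2) +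
        Real.sqrt (1 - ∑ i, ∑ j, ‖(σ * (A i)ᴴ * A j).trace‖ ^ 2) *
          Real.sqrt (1 - ∑ i, ∑ j, ‖(σ * (Uε * A i)ᴴ * (Uε * A j)).trace‖ ^ 2) =
      1 + (∑ i, ∑ j, ‖(σ * (A i)ᴴ * Uε * A j).trace‖ ^ 2)
        - ∑ i, ∑ j, ‖(σ * (A i)ᴴ * A j).trace‖ ^ 2 := by
  -- Uε is unitary
  have hU : Uεᴴ * Uε = 1 := by
    have hconj : ((-(Complex.I * (ε : ℂ))) • H)ᴴ = (Complex.I * (ε : ℂ)) • H := by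
      rw [conjTranspose_smul, hH.eq]
      congr 1
      simp [Complex.ext_iff]
    have hcomm : Commute ((Complex.I * (ε : ℂ)) • H) ((-(Complex.I * (ε : ℂ))) • H) :=
      ((Commute.refl H).smul_left _).smul_right _
    rw [hUε, ← Matrix.exp_conjTranspose, hconj, ← Matrix.exp_add_of_commute _ _ hcomm]
    simp
  -- second sum equals first sum
  have hsame : ∀ i j, σ * (Uε * A i)ᴴ * (Uε * A j) = σ * (A i)ᴴ * A j := by
    intro i j
    simp only [conjTranspose_mul, Matrix.mul_assoc]
    rw [← Matrix.mul_assoc Uεᴴ Uε, hU, Matrix.one_mul]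
  have hassoc : ∀ i j, σ * (A i)ᴴ * (Uε * A j) = σ * (A i)ᴴ * Uε * A j := by
    intro i j; simp only [Matrix.mul_assoc]
  simp only [hsame, hassoc]
  have hS := gram_sum_le_one n k σ hσ hσtr A hA
  rw [Real.mul_self_sqrt (by linarith)]
  ring
end

section
/- Fix Ω ∈ ℝ, T ≥ 0 and ε ∈ ℝ. For δ ∈ ℝ let F_δ be the 4×4 complex matrix F_δ = −i((Ω+δ)/2)(1⊗σ_z − σ_z⊗1) − σ_−⊗σ_− − σ_+⊗σ_+ + (1/2)(σ_+σ_−⊗1 + σ_−σ_+⊗1 + 1⊗σ_+σ_− + 1⊗σ_−σ_+), where σ_+ = |1⟩⟨0|, σ_− = σ_+†, and σ_z = diag(1,−1); and let Φ_T^δ be the linear map on 2×2 complex matrices defined by vec(Φ_T^δ(ρ)) = exp(−F_δ T)·vec(ρ). Then for every unit vector ψ = (ψ_0, ψ_1) ∈ ℂ² and ρ = |ψ⟩⟨ψ|, the superfidelity of the two outputs satisfies G(Φ_T^0(ρ), Φ_T^ε(ρ)) = 1 − 2e^{−2T}(1 − cos(εT))·|ψ_0|²·|ψ_1|². -/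
open Kronecker Matrix

/-- The raising operator `σ₊ = |1⟩⟨0|`. -/
noncomputable def sigPlus : Matrix (Fin 2) (Fin 2) ℂ := !![0, 0; 1, 0]

/-- The lowering operator `σ₋ = σ₊ᴴ`. -/
noncomputable def sigMinus : Matrix (Fin 2) (Fin 2) ℂ := sigPlusᴴ

/-- The Pauli matrix `σ_z = diag(1, −1)`. -/
noncomputable def sigZ : Matrix (Fin 2) (Fin 2) ℂ := !![1, 0; 0, -1]

/-- The generator
`F_δ = −i((Ω+δ)/2)(1⊗σ_z − σ_z⊗1) − σ₋⊗σ₋ − σ₊⊗σ₊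
      + ½(σ₊σ₋⊗1 + σ₋σ₊⊗1 + 1⊗σ₊σ₋ + 1⊗σ₋σ₊)` of the single-qubit master equation. -/
noncomputable def Fgen (Ω δ : ℝ) : Matrix (Fin 2 × Fin 2) (Fin 2 × Fin 2) ℂ :=
  (-(Complex.I * (((Ω + δ) / 2 : ℝ) : ℂ))) •
      ((1 : Matrix (Fin 2) (Fin 2) ℂ) ⊗ₖ sigZ - sigZ ⊗ₖ (1 : Matrix (Fin 2) (Fin 2) ℂ))
    - sigMinus ⊗ₖ sigMinus - sigPlus ⊗ₖ sigPlus
    + ((1 : ℂ) / 2) •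
        ((sigPlus * sigMinus) ⊗ₖ (1 : Matrix (Fin 2) (Fin 2) ℂ)
          + (sigMinus * sigPlus) ⊗ₖ (1 : Matrix (Fin 2) (Fin 2) ℂ)
          + (1 : Matrix (Fin 2) (Fin 2) ℂ) ⊗ₖ (sigPlus * sigMinus)
          + (1 : Matrix (Fin 2) (Fin 2) ℂ) ⊗ₖ (sigMinus * sigPlus))

/-- The channel `Φ_T^δ` defined by `vec(Φ_T^δ(ρ)) = exp(−F_δ T)·vec(ρ)`, where
`vec(X)(i,j) = X i j` (the `vec` map determined by `vec(|ψ⟩⟨φ|) = ψ ⊗ conj φ`). -/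
noncomputable def PhiT (Ω T δ : ℝ) (ρ : Matrix (Fin 2) (Fin 2) ℂ) :
    Matrix (Fin 2) (Fin 2) ℂ :=
  Matrix.of fun i j =>
    (NormedSpace.exp ((-(T : ℂ)) • Fgen Ω δ)).mulVec (fun p => ρ p.1 p.2) (i, j)

/-! ### Auxiliary diagonalization machinery -/

/-- The constant eigenvector matrix of `F_δ`. -/
noncomputable def Smat : Matrix (Fin 2 × Fin 2) (Fin 2 × Fin 2) ℂ :=
  Matrix.of fun p q =>
    match p.1.1, p.2.1, q.1.1, q.2.1 with
    | 0,0,0,0 => 1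
    | 1,1,0,0 => 1
    | 0,1,0,1 => 1
    | 1,0,1,0 => 1
    | 0,0,1,1 => 1
    | 1,1,1,1 => -1
    | _,_,_,_ => 0

/-- The inverse of `Smat`. -/
noncomputable def Sinv : Matrix (Fin 2 × Fin 2) (Fin 2 × Fin 2) ℂ :=
  Matrix.of fun p q =>
    match p.1.1, p.2.1, q.1.1, q.2.1 with
    | 0,0,0,0 => 1/2
    | 0,0,1,1 => 1/2
    | 0,1,0,1 => 1
    | 1,0,1,0 => 1
    | 1,1,0,0 => 1/2
    | 1,1,1,1 => -1/2
    | _,_,_,_ => 0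

/-- Eigenvalues of `−T·F_δ`. -/
noncomputable def dvec (Ω T δ : ℝ) : Fin 2 × Fin 2 → ℂ :=
  fun p =>
    match p.1.1, p.2.1 with
    | 0,0 => 0
    | 0,1 => -(T:ℂ) - Complex.I * ((Ω + δ : ℝ) : ℂ) * T
    | 1,0 => -(T:ℂ) + Complex.I * ((Ω + δ : ℝ) : ℂ) * T
    | _,_ => -2*(T:ℂ)

lemma sigMinus_eq : sigMinus = !![0, 1; 0, 0] := by
  ext i j
  fin_cases i <;> fin_cases j <;>
    simp [sigMinus, sigPlus, Matrix.conjTranspose_apply]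

set_option maxHeartbeats 1000000 in
lemma hSS' : Smat * Sinv = 1 := by
  ext ⟨i,j⟩ ⟨k,l⟩
  fin_cases i <;> fin_cases j <;> fin_cases k <;> fin_cases l <;>
    simp [Matrix.mul_apply, Fintype.sum_prod_type, Fin.sum_univ_two, Smat, Sinv,
      Matrix.one_apply, Prod.ext_iff] <;> norm_num

set_option maxHeartbeats 1000000 in
lemma hS'S : Sinv * Smat = 1 := by
  ext ⟨i,j⟩ ⟨k,l⟩
  fin_cases i <;> fin_cases j <;> fin_cases k <;> fin_cases l <;>
    simp [Matrix.mul_apply, Fintype.sum_prod_type, Fin.sum_univ_two, Smat, Sinv,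
      Matrix.one_apply, Prod.ext_iff] <;> norm_num

set_option maxHeartbeats 2000000 in
lemma hAS (Ω T δ : ℝ) :
    ((-(T:ℂ)) • Fgen Ω δ) * Smat = Smat * Matrix.diagonal (dvec Ω T δ) := by
  ext ⟨i,j⟩ ⟨k,l⟩
  fin_cases i <;> fin_cases j <;> fin_cases k <;> fin_cases l <;>
    simp [Matrix.mul_apply, Fintype.sum_prod_type, Fin.sum_univ_two, Smat, dvec,
      Fgen, sigPlus, sigMinus_eq, sigZ, Matrix.one_apply, Matrix.diagonal, Prod.ext_iff] <;>
    ring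

lemma exp_eq (Ω T δ : ℝ) :
    NormedSpace.exp ((-(T:ℂ)) • Fgen Ω δ) =
      Smat * Matrix.diagonal (fun p => Complex.exp (dvec Ω T δ p)) * Sinv := by
  have hA : (-(T:ℂ)) • Fgen Ω δ = Smat * Matrix.diagonal (dvec Ω T δ) * Sinv := by
    calc (-(T:ℂ)) • Fgen Ω δ = ((-(T:ℂ)) • Fgen Ω δ) * (Smat * Sinv) := by
          rw [hSS', mul_one]
      _ = (((-(T:ℂ)) • Fgen Ω δ) * Smat) * Sinv := by rw [mul_assoc]
      _ = _ := by rw [hAS]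
  let U : (Matrix (Fin 2 × Fin 2) (Fin 2 × Fin 2) ℂ)ˣ := ⟨Smat, Sinv, hSS', hS'S⟩
  rw [hA, show Smat = (U : Matrix (Fin 2 × Fin 2) (Fin 2 × Fin 2) ℂ) from rfl,
    show Sinv = ((U⁻¹ : (Matrix (Fin 2 × Fin 2) (Fin 2 × Fin 2) ℂ)ˣ) :
      Matrix (Fin 2 × Fin 2) (Fin 2 × Fin 2) ℂ) from rfl,
    Matrix.exp_units_conj, Matrix.exp_diagonal]
  rw [Pi.exp_def, ← Complex.exp_eq_exp_ℂ]

set_option maxHeartbeats 1000000 in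
lemma PhiT_eq (Ω T δ : ℝ) (ρ : Matrix (Fin 2) (Fin 2) ℂ) :
    PhiT Ω T δ ρ =
      !![ (1 + Complex.exp (-2*(T:ℂ)))/2 * ρ 0 0 + (1 - Complex.exp (-2*(T:ℂ)))/2 * ρ 1 1,
          Complex.exp (-(T:ℂ) - Complex.I * ((Ω + δ : ℝ) : ℂ) * T) * ρ 0 1;
          Complex.exp (-(T:ℂ) + Complex.I * ((Ω + δ : ℝ) : ℂ) * T) * ρ 1 0,
          (1 - Complex.exp (-2*(T:ℂ)))/2 * ρ 0 0 + (1 + Complex.exp (-2*(T:ℂ)))/2 * ρ 1 1 ] := by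
  unfold PhiT
  rw [exp_eq]
  ext i j
  fin_cases i <;> fin_cases j <;>
    simp [Matrix.mulVec, Matrix.mul_apply, dotProduct, Fintype.sum_prod_type, Matrix.of_apply,
      Fin.sum_univ_two, Smat, Sinv, dvec, Matrix.diagonal, Complex.exp_zero] <;> ring

lemma trace_mul_fin_two (M N : Matrix (Fin 2) (Fin 2) ℂ) :
    (M * N).trace = M 0 0 * N 0 0 + M 0 1 * N 1 0 + M 1 0 * N 0 1 + M 1 1 * N 1 1 := by
  simp [Matrix.trace_fin_two, Matrix.mul_apply, Fin.sum_univ_two]; ring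

lemma cexp_re_im (x y : ℝ) :
    Complex.exp ((x:ℂ) + Complex.I * y) =
      ((Real.exp x * Real.cos y : ℝ) : ℂ) + ((Real.exp x * Real.sin y : ℝ) : ℂ) * Complex.I := by
  rw [Complex.exp_add, mul_comm Complex.I (y:ℂ), Complex.exp_mul_I, ← Complex.ofReal_exp,
    ← Complex.ofReal_cos, ← Complex.ofReal_sin]
  push_cast
  ring

/-- For every unit vector `ψ ∈ ℂ²` and `ρ = |ψ⟩⟨ψ|`, the superfidelity of the outputs of the
single-qubit thermal channels without (`δ = 0`) and with (`δ = ε`) frequency error satisfies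
`G(Φ_T⁰(ρ), Φ_Tᵉ(ρ)) = 1 − 2e^{−2T}(1 − cos(εT))·|ψ₀|²·|ψ₁|²`. -/
theorem single_qubit_superfidelity
    (Ω T ε : ℝ) (hT : 0 ≤ T)
    (ψ : Fin 2 → ℂ)
    (hψ : ∑ i, ‖ψ i‖ ^ 2 = 1)
    (ρ : Matrix (Fin 2) (Fin 2) ℂ)
    (hρ : ρ = Matrix.vecMulVec ψ (star ψ)) :
    superG (PhiT Ω T 0 ρ) (PhiT Ω T ε ρ) =
      1 - 2 * Real.exp (-2 * T) * (1 - Real.cos (ε * T)) * (‖ψ 0‖ ^ 2 * ‖ψ 1‖ ^ 2) := by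
  subst hρ
  have hψ0 : ‖ψ 0‖ ^ 2 + ‖ψ 1‖ ^ 2 = 1 := by simpa [Fin.sum_univ_two] using hψ
  have hp : (0:ℝ) ≤ ‖ψ 0‖ ^ 2 := by positivity
  have hq : (0:ℝ) ≤ ‖ψ 1‖ ^ 2 := by positivity
  have hr0 : 0 < Real.exp (-2 * T) := Real.exp_pos _
  have hr1 : Real.exp (-2 * T) ≤ 1 := Real.exp_le_one_iff.mpr (by linarith)
  have hz : ∀ z : ℂ, z * star z = ((‖z‖ : ℝ) : ℂ) ^ 2 := by
    intro z
    rw [show star z = (starRingEnd ℂ) z from rfl, Complex.mul_conj]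
    norm_cast
    rw [Complex.normSq_eq_norm_sq]
  have hz0 := hz (ψ 0)
  have hz1 := hz (ψ 1)
  have hrC : Complex.exp (-2*(T:ℂ)) = ((Real.exp (-2 * T) : ℝ) : ℂ) := by
    rw [Complex.ofReal_exp]
    norm_num
  -- explicit output states
  have key : ∀ δ : ℝ, PhiT Ω T δ (Matrix.vecMulVec ψ (star ψ)) =
      !![ (((1 + Real.exp (-2 * T))/2 * ‖ψ 0‖ ^ 2 +
            (1 - Real.exp (-2 * T))/2 * ‖ψ 1‖ ^ 2 : ℝ) : ℂ),
          Complex.exp (-(T:ℂ) - Complex.I * ((Ω + δ : ℝ) : ℂ) * T) * (ψ 0 * star (ψ 1));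
          Complex.exp (-(T:ℂ) + Complex.I * ((Ω + δ : ℝ) : ℂ) * T) * (ψ 1 * star (ψ 0)),
          (((1 - Real.exp (-2 * T))/2 * ‖ψ 0‖ ^ 2 +
            (1 + Real.exp (-2 * T))/2 * ‖ψ 1‖ ^ 2 : ℝ) : ℂ) ] := by
    intro δ
    rw [PhiT_eq]
    ext i j
    fin_cases i <;> fin_cases j <;>
      simp only [Fin.zero_eta, Fin.mk_one, Fin.isValue, Matrix.of_apply, Matrix.cons_val',
        Matrix.cons_val_zero, Matrix.cons_val_one, Matrix.head_cons, Matrix.empty_val',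
        Matrix.cons_val_fin_one, Matrix.head_fin_const, Matrix.vecMulVec_apply, Pi.star_apply] <;>
      push_cast <;>
      first
        | rfl
        | (linear_combination ((1 + Complex.exp (-2*(T:ℂ)))/2) * hz0 + ((1 - Complex.exp (-2*(T:ℂ)))/2) * hz1)
        | (linear_combination ((1 + Complex.exp (-2*(T:ℂ)))/2) * hz0 + ((1 - Complex.exp (-2*(T:ℂ)))/2) * hz1 + ((((‖ψ 0‖ : ℝ) : ℂ)) ^ 2 - (((‖ψ 1‖ : ℝ) : ℂ)) ^ 2)/2 * hrC)
        | (linear_combination ((1 + Complex.exp (-2*(T:ℂ)))/2) * hz0 + ((1 - Complex.exp (-2*(T:ℂ)))/2) * hz1 + ((((‖ψ 1‖ : ℝ) : ℂ)) ^ 2 - (((‖ψ 0‖ : ℝ) : ℂ)) ^ 2)/2 * hrC)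
        | (linear_combination ((1 + Complex.exp (-2*(T:ℂ)))/2) * hz0 + ((1 - Complex.exp (-2*(T:ℂ)))/2) * hz1 + ((((‖ψ 0‖ : ℝ) : ℂ)) ^ 2 - (((‖ψ 1‖ : ℝ) : ℂ)) ^ 2) * hrC)
        | (linear_combination ((1 + Complex.exp (-2*(T:ℂ)))/2) * hz0 + ((1 - Complex.exp (-2*(T:ℂ)))/2) * hz1 + ((((‖ψ 1‖ : ℝ) : ℂ)) ^ 2 - (((‖ψ 0‖ : ℝ) : ℂ)) ^ 2) * hrC)
        | (linear_combination ((1 - Complex.exp (-2*(T:ℂ)))/2) * hz0 + ((1 + Complex.exp (-2*(T:ℂ)))/2) * hz1)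
        | (linear_combination ((1 - Complex.exp (-2*(T:ℂ)))/2) * hz0 + ((1 + Complex.exp (-2*(T:ℂ)))/2) * hz1 + ((((‖ψ 0‖ : ℝ) : ℂ)) ^ 2 - (((‖ψ 1‖ : ℝ) : ℂ)) ^ 2)/2 * hrC)
        | (linear_combination ((1 - Complex.exp (-2*(T:ℂ)))/2) * hz0 + ((1 + Complex.exp (-2*(T:ℂ)))/2) * hz1 + ((((‖ψ 1‖ : ℝ) : ℂ)) ^ 2 - (((‖ψ 0‖ : ℝ) : ℂ)) ^ 2)/2 * hrC)
        | (linear_combination ((1 - Complex.exp (-2*(T:ℂ)))/2) * hz0 + ((1 + Complex.exp (-2*(T:ℂ)))/2) * hz1 + ((((‖ψ 0‖ : ℝ) : ℂ)) ^ 2 - (((‖ψ 1‖ : ℝ) : ℂ)) ^ 2) * hrC)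
        | (linear_combination ((1 - Complex.exp (-2*(T:ℂ)))/2) * hz0 + ((1 + Complex.exp (-2*(T:ℂ)))/2) * hz1 + ((((‖ψ 1‖ : ℝ) : ℂ)) ^ 2 - (((‖ψ 0‖ : ℝ) : ℂ)) ^ 2) * hrC)
  have hcross : (ψ 0 * star (ψ 1)) * (ψ 1 * star (ψ 0)) =
      ((‖ψ 0‖ ^ 2 * ‖ψ 1‖ ^ 2 : ℝ) : ℂ) := by
    calc (ψ 0 * star (ψ 1)) * (ψ 1 * star (ψ 0))
        = (ψ 0 * star (ψ 0)) * (ψ 1 * star (ψ 1)) := by ring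
      _ = (((‖ψ 0‖ : ℝ) : ℂ)) ^ 2 * (((‖ψ 1‖ : ℝ) : ℂ)) ^ 2 := by rw [hz0, hz1]
      _ = _ := by push_cast; ring
  -- trace of the mixed product
  have tr_mix : ((PhiT Ω T 0 (Matrix.vecMulVec ψ (star ψ)) *
      PhiT Ω T ε (Matrix.vecMulVec ψ (star ψ))).trace) =
      ((((1 + Real.exp (-2 * T))/2 * ‖ψ 0‖ ^ 2 + (1 - Real.exp (-2 * T))/2 * ‖ψ 1‖ ^ 2) *
          ((1 + Real.exp (-2 * T))/2 * ‖ψ 0‖ ^ 2 + (1 - Real.exp (-2 * T))/2 * ‖ψ 1‖ ^ 2) +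
        ((1 - Real.exp (-2 * T))/2 * ‖ψ 0‖ ^ 2 + (1 + Real.exp (-2 * T))/2 * ‖ψ 1‖ ^ 2) *
          ((1 - Real.exp (-2 * T))/2 * ‖ψ 0‖ ^ 2 + (1 + Real.exp (-2 * T))/2 * ‖ψ 1‖ ^ 2) +
        2 * (Real.exp (-2 * T) * Real.cos (ε * T)) * (‖ψ 0‖ ^ 2 * ‖ψ 1‖ ^ 2) : ℝ) : ℂ) := by
    rw [trace_mul_fin_two, key 0, key ε]
    simp only [Matrix.of_apply, Matrix.cons_val', Matrix.cons_val_zero, Matrix.cons_val_one,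
      Matrix.head_cons, Matrix.empty_val', Matrix.cons_val_fin_one, Matrix.head_fin_const]
    have h1 : Complex.exp (-(T:ℂ) - Complex.I * ((Ω + 0 : ℝ) : ℂ) * T) * (ψ 0 * star (ψ 1)) *
        (Complex.exp (-(T:ℂ) + Complex.I * ((Ω + ε : ℝ) : ℂ) * T) * (ψ 1 * star (ψ 0))) =
        Complex.exp (((-2*T : ℝ) : ℂ) + Complex.I * ((ε * T : ℝ) : ℂ)) *
          ((‖ψ 0‖ ^ 2 * ‖ψ 1‖ ^ 2 : ℝ) : ℂ) := by
      rw [show Complex.exp (-(T:ℂ) - Complex.I * ((Ω + 0 : ℝ) : ℂ) * T) * (ψ 0 * star (ψ 1)) *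
          (Complex.exp (-(T:ℂ) + Complex.I * ((Ω + ε : ℝ) : ℂ) * T) * (ψ 1 * star (ψ 0))) =
          Complex.exp (-(T:ℂ) - Complex.I * ((Ω + 0 : ℝ) : ℂ) * T) *
          Complex.exp (-(T:ℂ) + Complex.I * ((Ω + ε : ℝ) : ℂ) * T) *
          ((ψ 0 * star (ψ 1)) * (ψ 1 * star (ψ 0))) from by ring,
        ← Complex.exp_add, hcross]
      congr 1
      push_cast
      ring
    have h2 : Complex.exp (-(T:ℂ) + Complex.I * ((Ω + 0 : ℝ) : ℂ) * T) * (ψ 1 * star (ψ 0)) *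
        (Complex.exp (-(T:ℂ) - Complex.I * ((Ω + ε : ℝ) : ℂ) * T) * (ψ 0 * star (ψ 1))) =
        Complex.exp (((-2*T : ℝ) : ℂ) + Complex.I * ((-(ε * T) : ℝ) : ℂ)) *
          ((‖ψ 0‖ ^ 2 * ‖ψ 1‖ ^ 2 : ℝ) : ℂ) := by
      rw [show Complex.exp (-(T:ℂ) + Complex.I * ((Ω + 0 : ℝ) : ℂ) * T) * (ψ 1 * star (ψ 0)) *
          (Complex.exp (-(T:ℂ) - Complex.I * ((Ω + ε : ℝ) : ℂ) * T) * (ψ 0 * star (ψ 1))) =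
          Complex.exp (-(T:ℂ) + Complex.I * ((Ω + 0 : ℝ) : ℂ) * T) *
          Complex.exp (-(T:ℂ) - Complex.I * ((Ω + ε : ℝ) : ℂ) * T) *
          ((ψ 0 * star (ψ 1)) * (ψ 1 * star (ψ 0))) from by ring,
        ← Complex.exp_add, hcross]
      congr 1
      push_cast
      ring
    rw [h1, h2, cexp_re_im, cexp_re_im]
    push_cast [Real.cos_neg, Real.sin_neg]
    ring
  -- purity traces
  have tr_pure : ∀ δ : ℝ, ((PhiT Ω T δ (Matrix.vecMulVec ψ (star ψ)) *
      PhiT Ω T δ (Matrix.vecMulVec ψ (star ψ))).trace) =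
      ((((1 + Real.exp (-2 * T))/2 * ‖ψ 0‖ ^ 2 + (1 - Real.exp (-2 * T))/2 * ‖ψ 1‖ ^ 2) *
          ((1 + Real.exp (-2 * T))/2 * ‖ψ 0‖ ^ 2 + (1 - Real.exp (-2 * T))/2 * ‖ψ 1‖ ^ 2) +
        ((1 - Real.exp (-2 * T))/2 * ‖ψ 0‖ ^ 2 + (1 + Real.exp (-2 * T))/2 * ‖ψ 1‖ ^ 2) *
          ((1 - Real.exp (-2 * T))/2 * ‖ψ 0‖ ^ 2 + (1 + Real.exp (-2 * T))/2 * ‖ψ 1‖ ^ 2) +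
        2 * Real.exp (-2 * T) * (‖ψ 0‖ ^ 2 * ‖ψ 1‖ ^ 2) : ℝ) : ℂ) := by
    intro δ
    rw [trace_mul_fin_two, key δ]
    simp only [Matrix.of_apply, Matrix.cons_val', Matrix.cons_val_zero, Matrix.cons_val_one,
      Matrix.head_cons, Matrix.empty_val', Matrix.cons_val_fin_one, Matrix.head_fin_const]
    have h1 : Complex.exp (-(T:ℂ) - Complex.I * ((Ω + δ : ℝ) : ℂ) * T) * (ψ 0 * star (ψ 1)) *
        (Complex.exp (-(T:ℂ) + Complex.I * ((Ω + δ : ℝ) : ℂ) * T) * (ψ 1 * star (ψ 0))) =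
        ((Real.exp (-2 * T) : ℝ) : ℂ) * ((‖ψ 0‖ ^ 2 * ‖ψ 1‖ ^ 2 : ℝ) : ℂ) := by
      rw [show Complex.exp (-(T:ℂ) - Complex.I * ((Ω + δ : ℝ) : ℂ) * T) * (ψ 0 * star (ψ 1)) *
          (Complex.exp (-(T:ℂ) + Complex.I * ((Ω + δ : ℝ) : ℂ) * T) * (ψ 1 * star (ψ 0))) =
          Complex.exp (-(T:ℂ) - Complex.I * ((Ω + δ : ℝ) : ℂ) * T) *
          Complex.exp (-(T:ℂ) + Complex.I * ((Ω + δ : ℝ) : ℂ) * T) *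
          ((ψ 0 * star (ψ 1)) * (ψ 1 * star (ψ 0))) from by ring,
        ← Complex.exp_add, hcross, show (-(T:ℂ) - Complex.I * ((Ω + δ : ℝ) : ℂ) * T) +
          (-(T:ℂ) + Complex.I * ((Ω + δ : ℝ) : ℂ) * T) = -2*(T:ℂ) from by ring, hrC]
    have h2 : Complex.exp (-(T:ℂ) + Complex.I * ((Ω + δ : ℝ) : ℂ) * T) * (ψ 1 * star (ψ 0)) *
        (Complex.exp (-(T:ℂ) - Complex.I * ((Ω + δ : ℝ) : ℂ) * T) * (ψ 0 * star (ψ 1))) =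
        ((Real.exp (-2 * T) : ℝ) : ℂ) * ((‖ψ 0‖ ^ 2 * ‖ψ 1‖ ^ 2 : ℝ) : ℂ) := by
      rw [show Complex.exp (-(T:ℂ) + Complex.I * ((Ω + δ : ℝ) : ℂ) * T) * (ψ 1 * star (ψ 0)) *
          (Complex.exp (-(T:ℂ) - Complex.I * ((Ω + δ : ℝ) : ℂ) * T) * (ψ 0 * star (ψ 1))) =
          Complex.exp (-(T:ℂ) - Complex.I * ((Ω + δ : ℝ) : ℂ) * T) *
          Complex.exp (-(T:ℂ) + Complex.I * ((Ω + δ : ℝ) : ℂ) * T) *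
          ((ψ 0 * star (ψ 1)) * (ψ 1 * star (ψ 0))) from by ring,
        ← Complex.exp_add, hcross, show (-(T:ℂ) - Complex.I * ((Ω + δ : ℝ) : ℂ) * T) +
          (-(T:ℂ) + Complex.I * ((Ω + δ : ℝ) : ℂ) * T) = -2*(T:ℂ) from by ring, hrC]
    rw [h1, h2]
    push_cast
    ring
  -- nonnegativity of 1 - purity
  have hX : 0 ≤ 1 -
      (((1 + Real.exp (-2 * T))/2 * ‖ψ 0‖ ^ 2 + (1 - Real.exp (-2 * T))/2 * ‖ψ 1‖ ^ 2) *
          ((1 + Real.exp (-2 * T))/2 * ‖ψ 0‖ ^ 2 + (1 - Real.exp (-2 * T))/2 * ‖ψ 1‖ ^ 2) +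
        ((1 - Real.exp (-2 * T))/2 * ‖ψ 0‖ ^ 2 + (1 + Real.exp (-2 * T))/2 * ‖ψ 1‖ ^ 2) *
          ((1 - Real.exp (-2 * T))/2 * ‖ψ 0‖ ^ 2 + (1 + Real.exp (-2 * T))/2 * ‖ψ 1‖ ^ 2) +
        2 * Real.exp (-2 * T) * (‖ψ 0‖ ^ 2 * ‖ψ 1‖ ^ 2)) := by
    nlinarith [sq_nonneg (‖ψ 0‖ ^ 2 - ‖ψ 1‖ ^ 2), mul_nonneg hp hq,
      mul_nonneg (mul_nonneg hp hq) (sub_nonneg.2 hr1),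
      mul_nonneg (mul_nonneg hp hq) hr0.le,
      mul_nonneg (mul_nonneg (mul_nonneg hp hq) hr0.le) (sub_nonneg.2 hr1),
      mul_nonneg hr0.le (sub_nonneg.2 hr1), sq_nonneg (1 - Real.exp (-2 * T)),
      sq_nonneg (Real.exp (-2 * T))]
  -- final assembly
  rw [superG, tr_mix, tr_pure 0, tr_pure ε]
  simp only [Complex.ofReal_re]
  rw [Real.mul_self_sqrt hX]
  ring
end
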